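/- In any (0, D)-coloring of the graph T0(D; x), obtained from D+1 pairwise disjoint triangles by identifying one vertex of each triangle into a single vertex x, the vertex x cannot receive the second color (the color whose class may induce maximum degree up to D). -/
import Mathlib


open SimpleGraph

/-- `H` is a minor of `G`: branch sets are nonempty, connected, pairwise disjoint,
and edges of `H` are realized between branch sets. -/
def SimpleGraph.IsMinor {W V : Type*} (H : SimpleGraph W) (G : SimpleGraph V) : Prop :=
  ∃ f : W → Set V, (∀ w, (f w).Nonempty) ∧ (∀ w, (G.induce (f w)).Connected) ∧
    (∀ w w', w ≠ w' → Disjoint (f w) (f w')) ∧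
    (∀ w w', H.Adj w w' → ∃ a ∈ f w, ∃ b ∈ f w', G.Adj a b)

/-- A graph is planar iff it has no `K₅` minor and no `K₃,₃` minor (Wagner's theorem). -/
def SimpleGraph.Planar {V : Type*} (G : SimpleGraph V) : Prop :=
  ¬ (completeGraph (Fin 5)).IsMinor G ∧
    ¬ (completeBipartiteGraph (Fin 3) (Fin 3)).IsMinor G

/-- `G` contains no cycle of length `n` (as a subgraph). -/
def SimpleGraph.HasNoCycleOfLength {V : Type*} (G : SimpleGraph V) (n : ℕ) : Prop :=
  ∀ (v : V) (w : G.Walk v v), w.IsCycle → w.length ≠ n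

/-- `f` is a `(d 0, …, d (k-1))`-coloring of `G`: each vertex has at most `d (f v)`
neighbors in its own color class. -/
def SimpleGraph.IsDefectiveColoring {V : Type*} {k : ℕ} (G : SimpleGraph V)
    (d : Fin k → ℕ) (f : V → Fin k) : Prop :=
  ∀ v, {u | G.Adj v u ∧ f u = f v}.ncard ≤ d (f v)

/-- `G` is `(d 0, …, d (k-1))`-colorable. -/
def SimpleGraph.DefectiveColorable {V : Type*} {k : ℕ} (G : SimpleGraph V)
    (d : Fin k → ℕ) : Prop :=
  ∃ f : V → Fin k, G.IsDefectiveColoring d f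

/-- `T0 D`: `D+1` pairwise disjoint triangles with one vertex of each identified
into the single vertex `x = none`. -/
def T0 (D : ℕ) : SimpleGraph (Option (Fin (D + 1) × Fin 2)) :=
  SimpleGraph.fromRel (fun a b =>
    (a = none ∧ b ≠ none) ∨ (∃ i, a = some (i, 0) ∧ b = some (i, 1)))

theorem stmt4 (D : ℕ) (f : Option (Fin (D + 1) × Fin 2) → Fin 2)
    (hf : (T0 D).IsDefectiveColoring ![0, D] f) :
    f none ≠ 1 := by
  intro h1
  have adjx : ∀ (i : Fin (D+1)) (j : Fin 2), (T0 D).Adj none (some (i, j)) := by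
    intro i j
    simp [T0, SimpleGraph.fromRel_adj]
  have adj01 : ∀ i : Fin (D+1), (T0 D).Adj (some (i, (0:Fin 2))) (some (i, (1:Fin 2))) := by
    intro i
    refine ⟨by simp, Or.inl (Or.inr ⟨i, rfl, rfl⟩)⟩
  -- each triangle has a color-1 vertex
  have key : ∀ i : Fin (D + 1), ∃ j : Fin 2, f (some (i, j)) = 1 := by
    intro i
    by_contra hc
    push_neg at hc
    have h0 : ∀ j : Fin 2, f (some (i, j)) = 0 := by
      intro j
      have := hc j
      omega
    have hle := hf (some (i, (0:Fin 2)))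
    rw [h0 0] at hle
    simp only [Matrix.cons_val_zero, Nat.le_zero] at hle
    have hmem : some (i, (1:Fin 2)) ∈ {u | (T0 D).Adj (some (i, (0:Fin 2))) u ∧ f u = 0} :=
      ⟨adj01 i, h0 1⟩
    rw [Set.ncard_eq_zero (Set.toFinite _)] at hle
    rw [hle] at hmem
    exact hmem
  choose g hg using key
  set S : Set (Option (Fin (D + 1) × Fin 2)) := {u | (T0 D).Adj none u ∧ f u = f none} with hS
  have hsub : Set.range (fun i => (some (i, g i) : Option (Fin (D+1) × Fin 2))) ⊆ S := by
    rintro _ ⟨i, rfl⟩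
    exact ⟨adjx i (g i), by rw [hg i, h1]⟩
  have hinj : Function.Injective (fun i : Fin (D+1) => (some (i, g i) : Option (Fin (D+1) × Fin 2))) := by
    intro a b hab
    simpa using congrArg (fun o => Option.map Prod.fst o) hab
  have hcard : (Set.range (fun i : Fin (D+1) => (some (i, g i) : Option (Fin (D+1) × Fin 2)))).ncard = D + 1 := by
    rw [← Nat.card_coe_set_eq, Nat.card_range_of_injective hinj, Nat.card_eq_fintype_card,
      Fintype.card_fin]
  have hle := hf none
  rw [h1] at hle
  simp only [Matrix.cons_val_one, Matrix.head_cons] at hle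
  have hD1 : D + 1 ≤ S.ncard := by
    have h := Set.ncard_le_ncard hsub (Set.toFinite S)
    rwa [hcard] at h
  have hSncard : S.ncard ≤ D := by
    simpa [hS, h1] using hle
  omega
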